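/- arXiv:2008.13149 — 4 statements merged into one kernel-verified Lean document; each statement's English description precedes it below -/
import Mathlib

section
/- For every integer n >= 1, the unique polynomial h(z) of degree at most 2^n - 2 with rational coefficients satisfying h(q^j) = 2/(1 - q^{2j}) for every odd integer j (where q = e^{pi*i/2^n} is a primitive 2^{n+1}-st root of unity) is h(z) = (1 - z^{2^n})/(1 - z^2) = sum_{k=0}^{2^{n-1}-1} z^{2k}. Equivalently, (1/2^{n-1}) * Tr((1 + z^{2^n})/((1 - q z)(1 - q^{-1} z))) = (1 - z^{2^n})/(1 - z^2), where Tr is the field trace from Q(q + q^{-1}) to Q applied coefficientwise. -/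
/-!
With `q = exp (πi/2^n)` we have `q^(2^n) = -1`, so for odd `j` the number `x = q^(2j)` satisfies
`x^(2^(n-1)) = -1`, and the geometric sum `∑_{k < 2^(n-1)} x^k = (x^(2^(n-1)) - 1)/(x - 1)`
equals `2/(1 - x)`.
Uniqueness: the difference of two solutions vanishes at the primitive `2^(n+1)`-st root of
unity `q`, whose minimal polynomial over `ℚ` is cyclotomic of degree `φ(2^(n+1)) = 2^n`,
larger than the degree bound.
-/

open Polynomial Complex

lemma Complex.isPrimitiveRoot_exp_pi_mul_I_div_two_pow (n : ℕ) :
    IsPrimitiveRoot (exp (Real.pi * I / 2 ^ n)) (2 ^ (n + 1)) := by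
  convert isPrimitiveRoot_exp (2 ^ (n + 1)) (by positivity) using 2
  push_cast
  ring

lemma Complex.exp_pi_mul_I_div_two_pow_pow (n : ℕ) :
    exp (Real.pi * I / 2 ^ n) ^ 2 ^ n = -1 := by
  rw [← exp_nat_mul, Nat.cast_pow, Nat.cast_ofNat, mul_div_cancel₀ _ (pow_ne_zero _ two_ne_zero),
    exp_pi_mul_I]

lemma geom_sum_eq_two_div_of_pow_eq_neg_one {K : Type*} [Field K] [NeZero (2 : K)] {x : K}
    {m : ℕ} (hx : x ^ m = -1) : ∑ k ∈ Finset.range m, x ^ k = 2 / (1 - x) := by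
  have hx1 : x ≠ 1 := by
    rintro rfl
    rw [one_pow] at hx
    exact two_ne_zero (α := K) (by linear_combination hx)
  rw [geom_sum_eq hx1, hx, ← neg_div_neg_eq]
  ring

lemma sum_zpow_pow_two_mul_of_pow_eq_neg_one {K : Type*} [Field K] [NeZero (2 : K)] {c : K}
    {m : ℕ} (hc : c ^ (2 * m) = -1) {j : ℤ} (hj : Odd j) :
    ∑ k ∈ Finset.range m, (c ^ j) ^ (2 * k) = 2 / (1 - c ^ (2 * j)) := by
  have hsq : (c ^ j) ^ 2 = c ^ (2 * j) := by rw [mul_comm, zpow_mul]; norm_cast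
  simp_rw [pow_mul, hsq]
  apply geom_sum_eq_two_div_of_pow_eq_neg_one
  rw [← hsq, ← pow_mul, ← zpow_natCast, ← zpow_mul, mul_comm, zpow_mul, zpow_natCast, hc,
    hj.neg_one_zpow]

lemma IsPrimitiveRoot.eq_zero_of_aeval_eq_zero_of_natDegree_lt {L : Type*} [Field L]
    [CharZero L] {μ : L} {k : ℕ} (hμ : IsPrimitiveRoot μ k) (hk : 0 < k) {p : ℚ[X]}
    (hp : aeval μ p = 0) (hdeg : p.natDegree < k.totient) : p = 0 := by
  by_contra hne
  have := natDegree_le_natDegree (minpoly.degree_le_of_ne_zero ℚ μ hne hp)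
  rw [← cyclotomic_eq_minpoly_rat hμ hk, natDegree_cyclotomic] at this
  omega

lemma eval_map_sum_X_pow_two_mul {R S : Type*} [CommSemiring R] [CommSemiring S] (f : R →+* S)
    (m : ℕ) (x : S) :
    ((∑ k ∈ Finset.range m, (X : R[X]) ^ (2 * k)).map f).eval x =
      ∑ k ∈ Finset.range m, x ^ (2 * k) := by
  simp [Polynomial.map_sum, eval_finsetSum]

lemma natDegree_sum_X_pow_two_mul_le {R : Type*} [Semiring R] (m : ℕ) :
    (∑ k ∈ Finset.range m, (X : R[X]) ^ (2 * k)).natDegree ≤ 2 * m - 2 :=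
  natDegree_sum_le_of_forall_le _ _ fun k hk =>
    (natDegree_X_pow_le _).trans (by have := Finset.mem_range.mp hk; omega)

/-- The unique polynomial `h` of degree at most `2^n - 2` with rational coefficients
satisfying `h(q^j) = 2/(1 - q^{2j})` for all odd integers `j`, where
`q = e^{πi/2^n}`, is `h(z) = ∑_{k=0}^{2^{n-1}-1} z^{2k} = (1-z^{2^n})/(1-z^2)`. -/
theorem stmt2 (n : ℕ) (hn : 1 ≤ n) :
    (∀ j : ℤ, Odd j →
        (((∑ k ∈ Finset.range (2 ^ (n - 1)), (Polynomial.X : Polynomial ℚ) ^ (2 * k)).map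
            (algebraMap ℚ ℂ)).eval (Complex.exp ((Real.pi : ℂ) * Complex.I / 2 ^ n) ^ j))
          = 2 / (1 - Complex.exp ((Real.pi : ℂ) * Complex.I / 2 ^ n) ^ (2 * j))) ∧
    (∀ h : Polynomial ℚ, h.natDegree ≤ 2 ^ n - 2 →
      (∀ j : ℤ, Odd j →
        ((h.map (algebraMap ℚ ℂ)).eval (Complex.exp ((Real.pi : ℂ) * Complex.I / 2 ^ n) ^ j))
          = 2 / (1 - Complex.exp ((Real.pi : ℂ) * Complex.I / 2 ^ n) ^ (2 * j))) →
      h = ∑ k ∈ Finset.range (2 ^ (n - 1)), Polynomial.X ^ (2 * k)) := by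
  have h2m : 2 * 2 ^ (n - 1) = 2 ^ n := by rw [← pow_succ', Nat.sub_add_cancel hn]
  have hg : ∀ j : ℤ, Odd j →
      (((∑ k ∈ Finset.range (2 ^ (n - 1)), (X : ℚ[X]) ^ (2 * k)).map (algebraMap ℚ ℂ)).eval
        (exp (Real.pi * I / 2 ^ n) ^ j)) = 2 / (1 - exp (Real.pi * I / 2 ^ n) ^ (2 * j)) :=
    fun j hj => by
      rw [eval_map_sum_X_pow_two_mul]
      exact sum_zpow_pow_two_mul_of_pow_eq_neg_one
        (h2m ▸ exp_pi_mul_I_div_two_pow_pow n) hj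
  refine ⟨hg, fun h hdeg hh => sub_eq_zero.mp ?_⟩
  refine (isPrimitiveRoot_exp_pi_mul_I_div_two_pow n).eq_zero_of_aeval_eq_zero_of_natDegree_lt
    (by positivity) ?_ ?_
  · have := (hh 1 odd_one).trans (hg 1 odd_one).symm
    rwa [zpow_one, ← sub_eq_zero, ← eval_sub, ← Polynomial.map_sub, eval_map_algebraMap] at this
  · rw [Nat.totient_prime_pow_succ Nat.prime_two]
    have := natDegree_sum_X_pow_two_mul_le (R := ℚ) (2 ^ (n - 1))
    have := natDegree_sub_le h (∑ k ∈ Finset.range (2 ^ (n - 1)), (X : ℚ[X]) ^ (2 * k))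
    have := Nat.one_lt_two_pow (n := n) (by omega)
    omega
end

section
/- With notation as in E_n(2) (characteristic 2, deg x_i = (2^i-1)/2^i), the pairing on the Frobenius quotient is perfect: if x_1^{a_1}...x_n^{a_n} is a monomial of integer degree with a_i <= 2^i - 1 for i < n and a_n <= 2^n - 2, then the complementary monomial x_1^{1-a_1} x_2^{3-a_2} ... x_{n-1}^{2^{n-1}-1-a_{n-1}} x_n^{2^n-2-a_n} also has integer degree, and their product equals alpha = x_1 x_2^3 x_3^7 ... x_{n-1}^{2^{n-1}-1} x_n^{2^n-2}, which has integer degree 2^{n+1} - 2n - 2. -/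
lemma aux_sum (m : ℕ) :
    ∑ i : Fin m, (((2 ^ ((i : ℕ) + 1) - 1 : ℕ) : ℚ))
        * ((2 ^ ((i : ℕ) + 1) - 1) / 2 ^ ((i : ℕ) + 1))
      = 2 ^ (m + 1) - 2 * m - 1 - (2 ^ m : ℚ)⁻¹ := by
  induction m with
  | zero => norm_num
  | succ k ih =>
      rw [Fin.sum_univ_castSucc]
      simp only [Fin.coe_castSucc, Fin.val_last] at *
      rw [ih, Nat.cast_sub (Nat.one_le_two_pow)]
      push_cast
      have h2 : (2 : ℚ) ^ (k + 1) ≠ 0 := by positivity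
      have h2' : (2 : ℚ) ^ k ≠ 0 := by positivity
      field_simp
      ring

theorem alpha_deg (n : ℕ) (hn : 1 ≤ n) :
    (∑ i : Fin n,
        ((((if (i : ℕ) + 1 < n then 2 ^ ((i : ℕ) + 1) - 1 else 2 ^ n - 2) : ℕ)) : ℚ)
          * ((2 ^ ((i : ℕ) + 1) - 1) / 2 ^ ((i : ℕ) + 1))
      = 2 ^ (n + 1) - 2 * n - 2) := by
  obtain ⟨m, rfl⟩ := Nat.exists_eq_add_of_le hn
  rw [add_comm] at *
  rw [Fin.sum_univ_castSucc]
  have hlast : ¬ ((Fin.last m : ℕ) + 1 < m + 1) := by simp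
  rw [if_neg hlast]
  have hterms : ∀ i : Fin m,
      ((((if ((i.castSucc : ℕ)) + 1 < m + 1 then 2 ^ (((i.castSucc : ℕ)) + 1) - 1
          else 2 ^ (m + 1) - 2) : ℕ)) : ℚ)
          * ((2 ^ (((i.castSucc : ℕ)) + 1) - 1) / 2 ^ (((i.castSucc : ℕ)) + 1))
        = (((2 ^ ((i : ℕ) + 1) - 1 : ℕ) : ℚ))
          * ((2 ^ ((i : ℕ) + 1) - 1) / 2 ^ ((i : ℕ) + 1)) := by
    intro i
    rw [if_pos (by simpa using i.isLt)]
    simp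
  rw [Finset.sum_congr rfl (fun i _ => hterms i), aux_sum]
  simp only [Fin.val_last]
  rw [Nat.cast_sub (by have := Nat.one_lt_two_pow_iff (n := m + 1) |>.mpr (by omega); omega)]
  push_cast
  have h2 : (2 : ℚ) ^ (m + 1) ≠ 0 := by positivity
  have h2' : (2 : ℚ) ^ m ≠ 0 := by positivity
  field_simp
  ring

/-- Perfectness of the pairing on the Frobenius quotient of `E_n(2)`:
if `x_1^{a_1}⋯x_n^{a_n}` has integer degree with `a_i ≤ 2^i-1` (`i < n`) and
`a_n ≤ 2^n-2`, then the complementary monomial also has integer degree, the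
product of the two is `α = x_1 x_2^3 ⋯ x_{n-1}^{2^{n-1}-1} x_n^{2^n-2}`, and
`deg α = 2^{n+1} - 2n - 2`. -/
theorem stmt5 (n : ℕ) (hn : 1 ≤ n) (a : Fin n → ℕ)
    (hbound : ∀ i : Fin n,
      a i ≤ (if (i : ℕ) + 1 < n then 2 ^ ((i : ℕ) + 1) - 1 else 2 ^ n - 2))
    (hint : ∃ z : ℤ, ∑ i : Fin n,
      (a i : ℚ) * ((2 ^ ((i : ℕ) + 1) - 1) / 2 ^ ((i : ℕ) + 1)) = z) :
    (∃ z : ℤ, ∑ i : Fin n,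
        ((((if (i : ℕ) + 1 < n then 2 ^ ((i : ℕ) + 1) - 1 else 2 ^ n - 2) - a i : ℕ) : ℚ)
          * ((2 ^ ((i : ℕ) + 1) - 1) / 2 ^ ((i : ℕ) + 1))) = z) ∧
    (∀ i : Fin n,
      a i + ((if (i : ℕ) + 1 < n then 2 ^ ((i : ℕ) + 1) - 1 else 2 ^ n - 2) - a i)
        = if (i : ℕ) + 1 < n then 2 ^ ((i : ℕ) + 1) - 1 else 2 ^ n - 2) ∧
    (∑ i : Fin n,
        ((((if (i : ℕ) + 1 < n then 2 ^ ((i : ℕ) + 1) - 1 else 2 ^ n - 2) : ℕ)) : ℚ)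
          * ((2 ^ ((i : ℕ) + 1) - 1) / 2 ^ ((i : ℕ) + 1))
      = 2 ^ (n + 1) - 2 * n - 2) := by
  obtain ⟨z, hz⟩ := hint
  have halpha := alpha_deg n hn
  refine ⟨⟨(2 ^ (n + 1) - 2 * n - 2 : ℤ) - z, ?_⟩, fun i => by have := hbound i; omega, halpha⟩
  have hterms : ∀ i : Fin n,
      ((((if (i : ℕ) + 1 < n then 2 ^ ((i : ℕ) + 1) - 1 else 2 ^ n - 2) - a i : ℕ) : ℚ)
          * ((2 ^ ((i : ℕ) + 1) - 1) / 2 ^ ((i : ℕ) + 1)))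
        = ((((if (i : ℕ) + 1 < n then 2 ^ ((i : ℕ) + 1) - 1 else 2 ^ n - 2) : ℕ)) : ℚ)
          * ((2 ^ ((i : ℕ) + 1) - 1) / 2 ^ ((i : ℕ) + 1))
          - (a i : ℚ) * ((2 ^ ((i : ℕ) + 1) - 1) / 2 ^ ((i : ℕ) + 1)) := by
    intro i
    rw [Nat.cast_sub (hbound i), sub_mul]
  rw [Finset.sum_congr rfl (fun i _ => hterms i), Finset.sum_sub_distrib, hz, halpha]
  push_cast
  ring
end

section
/- Let p be an odd prime and E_n(p) the subalgebra of integer-degree elements of k[x_1,...,x_n] ⊗ Λ(ξ_1,...,ξ_n) where deg x_i = 2(p^i-1)/p^i and deg ξ_i = (p^i-2)/p^i. The quotient of E_n(p) by the ideal generated by y_i = x_i^{p^i} (1 <= i <= n) has k-dimension 2^n * p^{n(n-1)/2}, with basis the monomials x_1^{a_1}...x_n^{a_n} ξ_1^{e_1}...ξ_n^{e_n} of integer degree with 0 <= a_i <= p^i - 1 and e_i in {0,1}. -/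
/-!
The degree of `x^a ξ^e` equals `∑ (2 aᵢ + eᵢ) - 2 M / p^n` with `M = ∑ (aᵢ + eᵢ) p^(n-1-i)`, so,
`p` being odd, it is an integer exactly when `p^n ∣ M`. For fixed `e` this says that the residues
`(aᵢ mod p^(i+1))ᵢ` lie in one fibre of the surjective homomorphism
`∏ᵢ ℤ/p^(i+1) → ℤ/p^n, v ↦ ∑ vᵢ p^(n-1-i)`. Every fibre has `p^(n(n+1)/2) / p^n = p^(n(n-1)/2)`
elements, and there are `2^n` choices of `e`.
-/

open Finset

namespace ZMod

def scaleHom {m N : ℕ} (k : ℕ) (h : N ∣ m * k) : ZMod m →+ ZMod N :=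
  lift m ⟨zmultiplesHom (ZMod N) (k : ZMod N), by
    simpa [← Nat.cast_mul] using (natCast_eq_zero_iff _ _).2 h⟩

@[simp]
lemma scaleHom_natCast {m N : ℕ} (k : ℕ) (h : N ∣ m * k) (a : ℕ) :
    scaleHom k h (a : ZMod m) = a * k := by
  rw [scaleHom, ← Int.cast_natCast a, lift_coe]
  simp

end ZMod

def natLtEquivPiZMod {ι : Type*} (m : ι → ℕ) [∀ i, NeZero (m i)] :
    {a : ι → ℕ // ∀ i, a i < m i} ≃ ((i : ι) → ZMod (m i)) where
  toFun a := fun i => a.1 i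
  invFun v := ⟨fun i => (v i).val, fun _ => ZMod.val_lt _⟩
  left_inv a := Subtype.ext <| funext fun i => ZMod.val_cast_of_lt (a.2 i)
  right_inv v := funext fun i => ZMod.natCast_zmod_val (v i)

lemma AddMonoidHom.natCard_fiber_mul_natCard {G H : Type*} [AddGroup G] [Finite G] [AddGroup H]
    {f : G →+ H} (hf : Function.Surjective f) (y : H) :
    Nat.card {g // f g = y} * Nat.card H = Nat.card G := by
  classical
  have := Fintype.ofFinite G
  have := Finite.of_surjective f hf
  have := Fintype.ofFinite H
  rw [Nat.card_eq_fintype_card, Fintype.card_subtype, Nat.card_eq_fintype_card,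
    Nat.card_eq_fintype_card]
  calc #{g | f g = y} * Fintype.card H = ∑ y' : H, #{g | f g = y'} := by
        rw [sum_congr rfl fun y' _ => card_fiber_eq_of_mem_range f (hf y') (hf y)]
        simp [mul_comm]
    _ = Fintype.card G := (card_eq_sum_card_fiberwise fun _ _ => mem_univ _).symm

lemma exists_int_eq_sub_two_mul_div_iff {N : ℕ} (hN : Odd N) (T M : ℕ) :
    (∃ z : ℤ, (T : ℚ) - 2 * M / N = z) ↔ N ∣ M := by
  have hN0 : (N : ℚ) ≠ 0 := by exact_mod_cast hN.pos.ne'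
  constructor
  · rintro ⟨z, hz⟩
    field_simp at hz
    have h2M : (N : ℤ) ∣ 2 * M := ⟨T - z, by
      exact_mod_cast (by push_cast; linarith : ((2 * M : ℤ) : ℚ) = ((N * (T - z) : ℤ) : ℚ))⟩
    exact (Nat.coprime_two_right.mpr hN).dvd_of_dvd_mul_left (by exact_mod_cast h2M)
  · rintro ⟨c, rfl⟩
    exact ⟨T - 2 * c, by push_cast; field_simp⟩

def weightedSumHom (p n : ℕ) : ((i : Fin n) → ZMod (p ^ ((i : ℕ) + 1))) →+ ZMod (p ^ n) :=
  ∑ i : Fin n, (ZMod.scaleHom (p ^ (n - 1 - i))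
    (by rw [← pow_add]; exact pow_dvd_pow p (by omega))).comp (Pi.evalAddMonoidHom _ i)

lemma weightedSumHom_natCast (p n : ℕ) (a : Fin n → ℕ) :
    weightedSumHom p n (fun i => (a i : ZMod _)) =
      ((∑ i : Fin n, a i * p ^ (n - 1 - i) : ℕ) : ZMod (p ^ n)) := by
  simp [weightedSumHom]

lemma weightedSumHom_surjective (p : ℕ) [NeZero p] : ∀ n, Function.Surjective (weightedSumHom p n)
  | 0 => by
    have : Subsingleton (ZMod (p ^ 0)) := by rw [pow_zero]; infer_instance
    exact fun y => ⟨0, Subsingleton.elim _ _⟩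
  | m + 1 => fun y => by
    refine ⟨fun i => ((Pi.single (Fin.last m) y.val : Fin (m + 1) → ℕ) i : ZMod _), ?_⟩
    rw [weightedSumHom_natCast]
    simp [Pi.single_apply]

lemma natCard_weightedSumHom_fiber (p n : ℕ) [NeZero p] (y : ZMod (p ^ n)) :
    Nat.card {v // weightedSumHom p n v = y} = p ^ (n * (n - 1) / 2) := by
  have hG : Nat.card ((i : Fin n) → ZMod (p ^ ((i : ℕ) + 1))) =
      p ^ (n * (n - 1) / 2) * p ^ n := by
    rw [Nat.card_pi]
    simp_rw [Nat.card_zmod]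
    rw [prod_pow_eq_pow_sum, ← pow_add, Fin.sum_univ_eq_sum_range (· + 1), sum_add_distrib,
      sum_range_id]
    simp
  have := AddMonoidHom.natCard_fiber_mul_natCard (weightedSumHom_surjective p n) y
  rw [hG, Nat.card_zmod] at this
  exact Nat.eq_of_mul_eq_mul_right (pow_pos (Nat.pos_of_neZero p) n) this

theorem natCard_bounded_pairs_pow_dvd_weightedSum (p n : ℕ) [NeZero p] :
    Nat.card {ae : (Fin n → ℕ) × (Fin n → ℕ) // (∀ i : Fin n, ae.1 i < p ^ ((i : ℕ) + 1)) ∧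
      (∀ i, ae.2 i < 2) ∧ p ^ n ∣ ∑ i : Fin n, (ae.1 i + ae.2 i) * p ^ (n - 1 - i)} =
      2 ^ n * p ^ (n * (n - 1) / 2) := by
  let A := {a : Fin n → ℕ // ∀ i : Fin n, a i < p ^ ((i : ℕ) + 1)}
  let E := {e : Fin n → ℕ // ∀ i, e i < 2}
  let C : A → E → Prop := fun a e => p ^ n ∣ ∑ i : Fin n, (a.1 i + e.1 i) * p ^ (n - 1 - i)
  have : Fintype E := Fintype.ofEquiv _ (natLtEquivPiZMod _).symm
  have : Finite A := Finite.of_equiv _ (natLtEquivPiZMod _).symm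
  have hE : Nat.card E = 2 ^ n := by
    rw [Nat.card_congr (natLtEquivPiZMod _)]
    simp
  have hfiber (e : E) : Nat.card {a // C a e} = p ^ (n * (n - 1) / 2) := by
    rw [← natCard_weightedSumHom_fiber p n (-((∑ i : Fin n, e.1 i * p ^ (n - 1 - i) : ℕ) : ZMod _))]
    refine Nat.card_congr (Equiv.subtypeEquiv (natLtEquivPiZMod _) fun a => ?_)
    rw [eq_neg_iff_add_eq_zero, show natLtEquivPiZMod _ a = fun i => (a.1 i : ZMod _) from rfl,
      weightedSumHom_natCast, ← Nat.cast_add, ZMod.natCast_eq_zero_iff, ← sum_add_distrib]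
    simp only [C, add_mul]
  calc _ = Nat.card (Σ e : E, {a // C a e}) := Nat.card_congr
        { toFun s := ⟨⟨s.1.2, s.2.2.1⟩, ⟨s.1.1, s.2.1⟩, s.2.2.2⟩
          invFun x := ⟨(x.2.1.1, x.1.1), x.2.1.2, x.1.2, x.2.2⟩
          left_inv _ := rfl
          right_inv _ := rfl }
    _ = _ := by
      rw [Nat.card_sigma]
      simp_rw [hfiber, sum_const, card_univ, ← Nat.card_eq_fintype_card, hE, smul_eq_mul]

lemma sum_degree_eq_sub_div {p : ℕ} (hp : p ≠ 0) {n : ℕ} (a e : Fin n → ℕ) :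
    ∑ i : Fin n,
        ((a i : ℚ) * (2 * ((p : ℚ) ^ ((i : ℕ) + 1) - 1) / (p : ℚ) ^ ((i : ℕ) + 1))
          + (e i : ℚ) * (((p : ℚ) ^ ((i : ℕ) + 1) - 2) / (p : ℚ) ^ ((i : ℕ) + 1)))
      = ((∑ i, (2 * a i + e i) : ℕ) : ℚ)
        - 2 * ((∑ i : Fin n, (a i + e i) * p ^ (n - 1 - i) : ℕ) : ℚ) / (p ^ n : ℕ) := by
  push_cast
  rw [mul_sum, sum_div, ← sum_sub_distrib]
  refine sum_congr rfl fun i _ => ?_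
  have hpow : (p : ℚ) ^ (n - 1 - i) * (p : ℚ) ^ ((i : ℕ) + 1) = (p : ℚ) ^ n := by
    rw [← pow_add]; congr 1; omega
  field_simp
  linear_combination (2 * ((a i : ℚ) + e i)) * hpow

theorem stmt6_general (p : ℕ) (hodd : Odd p) (n : ℕ) :
    Nat.card {ae : (Fin n → ℕ) × (Fin n → ℕ) //
      (∀ i : Fin n, ae.1 i ≤ p ^ ((i : ℕ) + 1) - 1) ∧
      (∀ i : Fin n, ae.2 i ≤ 1) ∧
      (∃ z : ℤ, ∑ i : Fin n,
        ((ae.1 i : ℚ) * (2 * ((p : ℚ) ^ ((i : ℕ) + 1) - 1) / (p : ℚ) ^ ((i : ℕ) + 1))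
          + (ae.2 i : ℚ) * (((p : ℚ) ^ ((i : ℕ) + 1) - 2) / (p : ℚ) ^ ((i : ℕ) + 1))) = z)}
    = 2 ^ n * p ^ (n * (n - 1) / 2) := by
  have : NeZero p := ⟨hodd.pos.ne'⟩
  rw [← natCard_bounded_pairs_pow_dvd_weightedSum p n]
  refine Nat.card_congr (Equiv.subtypeEquivRight fun ae => ?_)
  rw [sum_degree_eq_sub_div hodd.pos.ne', exists_int_eq_sub_two_mul_div_iff hodd.pow]
  have hpos (i : Fin n) : 0 < p ^ ((i : ℕ) + 1) := pow_pos hodd.pos _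
  refine and_congr (forall_congr' fun i => ?_) (and_congr (forall_congr' fun i => ?_) Iff.rfl)
  all_goals have := hpos i; omega

/-- For `p` an odd prime: the number of monomials
`x_1^{a_1}⋯x_n^{a_n} ξ_1^{e_1}⋯ξ_n^{e_n}` of integer degree with `a_i ≤ p^i - 1`
and `e_i ∈ {0,1}` — i.e. the dimension of the quotient of `E_n(p)` by the
parameters `y_i = x_i^{p^i}` — equals `2^n p^{n(n-1)/2}`. -/
theorem stmt6 (p : ℕ) (hp : p.Prime) (hodd : Odd p) (n : ℕ) :
    Nat.card {ae : (Fin n → ℕ) × (Fin n → ℕ) //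
      (∀ i : Fin n, ae.1 i ≤ p ^ ((i : ℕ) + 1) - 1) ∧
      (∀ i : Fin n, ae.2 i ≤ 1) ∧
      (∃ z : ℤ, ∑ i : Fin n,
        ((ae.1 i : ℚ) * (2 * ((p : ℚ) ^ ((i : ℕ) + 1) - 1) / (p : ℚ) ^ ((i : ℕ) + 1))
          + (ae.2 i : ℚ) * (((p : ℚ) ^ ((i : ℕ) + 1) - 2) / (p : ℚ) ^ ((i : ℕ) + 1))) = z)}
    = 2 ^ n * p ^ (n * (n - 1) / 2) :=
  stmt6_general p hodd n
end

section
/- In E_2(2) = Int(k[x_1,x_2]) with char k = 2, deg x_1 = 1/2, deg x_2 = 3/4, the elements u = x_1^2, v = x_1 x_2^2, w = x_2^4 generate E_2(2), they have degrees 1, 2, 3 respectively, and E_2(2) is isomorphic as a graded algebra to k[U,V,W]/(UW + V^2) with deg U = 1, deg V = 2, deg W = 3. -/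
open MvPolynomial

/-- `E_2(2)`: the span of the monomials `x_1^a x_2^b` of integer degree, where
`deg x_1 = 1/2`, `deg x_2 = 3/4`. -/
noncomputable def E22 (k : Type*) [Field k] : Submodule k (MvPolynomial (Fin 2) k) :=
  Submodule.span k {m : MvPolynomial (Fin 2) k | ∃ a b : ℕ,
    m = X 0 ^ a * X 1 ^ b ∧ ∃ z : ℤ, (a : ℚ) * (1 / 2) + (b : ℚ) * (3 / 4) = z}

/-!
The substitution `U ↦ x₀², V ↦ x₀x₁², W ↦ x₁⁴` sends monomials to monomials, via the exponent
map `(i, j, l) ↦ (2i + j, 2j + 4l)`. Its image is exactly the set of `(a, b)` with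
`2a + 3b ≡ 0 (mod 4)`, which gives the image of the algebra map. Using `V² = UW`, every polynomial
is congruent to one of `V`-degree at most one, and on such exponents the exponent map is
injective, so such a polynomial in the kernel is zero. In characteristic 2, `UW - V² = UW + V²`.
-/

theorem MvPolynomial.IsWeightedHomogeneous.weightedTotalDegree_eq {σ R M : Type*}
    [CommSemiring R] [AddCommMonoid M] [SemilatticeSup M] [OrderBot M] {w : σ → M}
    {φ : MvPolynomial σ R} {n : M} (hφ : IsWeightedHomogeneous w φ n) (h : φ ≠ 0) :
    weightedTotalDegree w φ = n :=
  WithBot.coe_injective (by rw [← weightedTotalDegree_coe w φ h, hφ.weighted_total_degree h])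

namespace E22

section CommSemiring

variable {R : Type*} [CommSemiring R]

lemma monomial_fin_two (a b : ℕ) (c : R) :
    (monomial (Finsupp.single 0 a + Finsupp.single 1 b) c : MvPolynomial (Fin 2) R)
      = C c * X 0 ^ a * X 1 ^ b := by
  rw [monomial_eq, Finsupp.prod_fintype _ _ (fun _ => pow_zero _), Fin.prod_univ_two]
  simp [mul_assoc]

lemma monomial_fin_three (d : Fin 3 →₀ ℕ) (c : R) :
    (monomial d c : MvPolynomial (Fin 3) R) = C c * X 0 ^ d 0 * X 1 ^ d 1 * X 2 ^ d 2 := by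
  rw [monomial_eq, Finsupp.prod_fintype _ _ (fun _ => pow_zero _), Fin.prod_univ_three]
  ring

variable (R) in
noncomputable def uvwMap : MvPolynomial (Fin 3) R →ₐ[R] MvPolynomial (Fin 2) R :=
  aeval ![X 0 ^ 2, X 0 * X 1 ^ 2, X 1 ^ 4]

noncomputable def uvwExponent (d : Fin 3 →₀ ℕ) : Fin 2 →₀ ℕ :=
  Finsupp.single 0 (2 * d 0 + d 1) + Finsupp.single 1 (2 * d 1 + 4 * d 2)

lemma uvwExponent_eq_iff (d : Fin 3 →₀ ℕ) (a b : ℕ) :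
    uvwExponent d = Finsupp.single 0 a + Finsupp.single 1 b ↔
      2 * d 0 + d 1 = a ∧ 2 * d 1 + 4 * d 2 = b := by
  refine ⟨fun h => ⟨?_, ?_⟩, fun ⟨ha, hb⟩ => by rw [uvwExponent, ha, hb]⟩
  · simpa [uvwExponent] using DFunLike.congr_fun h 0
  · simpa [uvwExponent] using DFunLike.congr_fun h 1

lemma uvwMap_monomial (d : Fin 3 →₀ ℕ) (c : R) :
    uvwMap R (monomial d c) = monomial (uvwExponent d) c := by
  rw [uvwMap, aeval_monomial, Finsupp.prod_fintype _ _ (fun _ => pow_zero _), Fin.prod_univ_three,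
    uvwExponent, monomial_fin_two]
  simp only [Matrix.cons_val, algebraMap_eq]
  ring

lemma uvwMap_apply (p : MvPolynomial (Fin 3) R) :
    uvwMap R p = ∑ d ∈ p.support, monomial (uvwExponent d) (coeff d p) := by
  conv_lhs => rw [p.as_sum, map_sum]
  simp only [uvwMap_monomial]

lemma uvwExponent_injOn : Set.InjOn uvwExponent {d | d 1 ≤ 1} := by
  intro d (hd : d 1 ≤ 1) e (he : e 1 ≤ 1) h
  obtain ⟨h0, h1⟩ := (uvwExponent_eq_iff d _ _).1 h
  ext i
  fin_cases i
  exacts [(by omega : d 0 = e 0), (by omega : d 1 = e 1), (by omega : d 2 = e 2)]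

lemma eq_zero_of_uvwMap_eq_zero {q : MvPolynomial (Fin 3) R} (hq : ∀ d ∈ q.support, d 1 ≤ 1)
    (h : uvwMap R q = 0) : q = 0 := by
  ext d
  by_contra hd
  have hcoeff := congrArg (coeff (uvwExponent d)) h
  rw [uvwMap_apply, coeff_sum, Finset.sum_eq_single d, coeff_monomial, if_pos rfl] at hcoeff
  · exact hd hcoeff
  · intro e he hed
    rw [coeff_monomial, if_neg fun hexp =>
      hed (uvwExponent_injOn (hq e he) (hq d (mem_support_iff.2 hd)) hexp)]
  · exact fun hd' => absurd (notMem_support_iff.1 hd') hd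

lemma exists_uvwExponent_eq_iff (a b : ℕ) :
    (∃ d, uvwExponent d = Finsupp.single 0 a + Finsupp.single 1 b) ↔
      ∃ z : ℤ, (a : ℚ) * (1 / 2) + (b : ℚ) * (3 / 4) = z := by
  simp only [uvwExponent_eq_iff]
  constructor
  · rintro ⟨d, rfl, rfl⟩
    exact ⟨d 0 + 2 * d 1 + 3 * d 2, by push_cast; ring⟩
  · rintro ⟨z, hz⟩
    have h4 : (2 * a + 3 * b : ℤ) = 4 * z := by
      exact_mod_cast (by linarith : (2 * a + 3 * b : ℚ) = 4 * z)
    refine ⟨Finsupp.equivFunOnFinite.symm ![a / 2, a % 2, (b - 2 * (a % 2)) / 4],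
      Nat.div_add_mod a 2, ?_⟩
    change 2 * (a % 2) + 4 * ((b - 2 * (a % 2)) / 4) = b
    omega

end CommSemiring

theorem range_uvwMap (k : Type*) [Field k] :
    Subalgebra.toSubmodule (uvwMap k).range = E22 k := by
  apply le_antisymm
  · rintro _ ⟨p, rfl⟩
    change uvwMap k p ∈ E22 k
    rw [uvwMap_apply]
    refine Submodule.sum_mem _ fun d _ => ?_
    rw [uvwExponent, monomial_fin_two, mul_assoc, ← smul_eq_C_mul]
    exact Submodule.smul_mem _ _
      (Submodule.subset_span ⟨_, _, rfl, (exists_uvwExponent_eq_iff _ _).1 ⟨d, rfl⟩⟩)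
  · rw [E22, Submodule.span_le]
    rintro _ ⟨a, b, rfl, hz⟩
    obtain ⟨d, hd⟩ := (exists_uvwExponent_eq_iff a b).2 hz
    refine (AlgHom.mem_range _).2 ⟨monomial d 1, ?_⟩
    rw [uvwMap_monomial, hd, monomial_fin_two, C_1, one_mul]

section CommRing

variable {R : Type*} [CommRing R]

lemma uvwMap_relation : uvwMap R (X 0 * X 2 - X 1 ^ 2) = 0 := by
  rw [uvwMap, map_sub, map_mul, map_pow, aeval_X, aeval_X, aeval_X]
  simp only [Matrix.cons_val]
  ring

lemma exists_monomial_sub_mem_span_relation (d : Fin 3 →₀ ℕ) (c : R) :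
    ∃ e : Fin 3 →₀ ℕ, e 1 ≤ 1 ∧
      monomial d c - monomial e c ∈ Ideal.span {(X 0 * X 2 - X 1 ^ 2 : MvPolynomial (Fin 3) R)} := by
  set m := d 1 / 2
  set r := d 1 % 2
  refine ⟨Finsupp.equivFunOnFinite.symm ![d 0 + m, r, d 2 + m],
    Nat.le_of_lt_succ (Nat.mod_lt _ two_pos), ?_⟩
  have hdiff : monomial d c - monomial (Finsupp.equivFunOnFinite.symm ![d 0 + m, r, d 2 + m]) c
      = C c * X 0 ^ d 0 * X 1 ^ r * X 2 ^ d 2 * ((X 1 ^ 2) ^ m - (X 0 * X 2) ^ m) := by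
    rw [monomial_fin_three, monomial_fin_three, show d 1 = 2 * m + r by omega]
    simp only [Finsupp.equivFunOnFinite_symm_apply_apply, Matrix.cons_val]
    ring
  rw [hdiff, Ideal.mem_span_singleton]
  exact dvd_mul_of_dvd_right (dvd_sub_comm.1 (sub_dvd_pow_sub_pow _ _ _)) _

lemma exists_sub_mem_span_relation (p : MvPolynomial (Fin 3) R) :
    ∃ q : MvPolynomial (Fin 3) R, (∀ d ∈ q.support, d 1 ≤ 1) ∧
      p - q ∈ Ideal.span {(X 0 * X 2 - X 1 ^ 2 : MvPolynomial (Fin 3) R)} := by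
  induction p using MvPolynomial.induction_on' with
  | monomial d c =>
    obtain ⟨e, he, hmem⟩ := exists_monomial_sub_mem_span_relation d c
    refine ⟨monomial e c, fun e' he' => ?_, hmem⟩
    rwa [Finset.mem_singleton.1 (support_monomial_subset he')]
  | add p₁ p₂ ih₁ ih₂ =>
    obtain ⟨q₁, hq₁, h₁⟩ := ih₁
    obtain ⟨q₂, hq₂, h₂⟩ := ih₂
    refine ⟨q₁ + q₂, fun d hd => (Finset.mem_union.1 (support_add hd)).elim (hq₁ d) (hq₂ d), ?_⟩
    rw [add_sub_add_comm]
    exact Ideal.add_mem _ h₁ h₂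

theorem ker_uvwMap :
    RingHom.ker (uvwMap R) = Ideal.span {(X 0 * X 2 - X 1 ^ 2 : MvPolynomial (Fin 3) R)} := by
  have hle : Ideal.span {(X 0 * X 2 - X 1 ^ 2 : MvPolynomial (Fin 3) R)} ≤ RingHom.ker (uvwMap R) :=
    (Ideal.span_singleton_le_iff_mem _).2 uvwMap_relation
  refine le_antisymm (fun p hp => ?_) hle
  obtain ⟨q, hq, hpq⟩ := exists_sub_mem_span_relation p
  have hq0 : uvwMap R q = 0 := by
    have := RingHom.mem_ker.1 (hle hpq)
    rwa [map_sub, RingHom.mem_ker.1 hp, zero_sub, neg_eq_zero] at this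
  rwa [eq_zero_of_uvwMap_eq_zero hq hq0, sub_zero] at hpq

end CommRing

end E22

open E22 in
/-- Over a field `k` of characteristic 2: the elements `u = x_1^2`, `v = x_1 x_2^2`,
`w = x_2^4` have (weighted) degrees `1, 2, 3`, they generate `E_2(2)` (the image of
`k[U,V,W] → k[x_1,x_2]`, `U ↦ u, V ↦ v, W ↦ w`, is exactly `E_2(2)`), and the
kernel of this map is generated by `UW + V^2`; that is,
`E_2(2) ≅ k[U,V,W]/(UW + V^2)`. -/
theorem stmt18 (k : Type*) [Field k] [CharP k 2] :
    weightedTotalDegree ![(1 : ℚ≥0) / 2, 3 / 4] ((X 0 : MvPolynomial (Fin 2) k) ^ 2) = 1 ∧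
    weightedTotalDegree ![(1 : ℚ≥0) / 2, 3 / 4] ((X 0 : MvPolynomial (Fin 2) k) * X 1 ^ 2) = 2 ∧
    weightedTotalDegree ![(1 : ℚ≥0) / 2, 3 / 4] ((X 1 : MvPolynomial (Fin 2) k) ^ 4) = 3 ∧
    Subalgebra.toSubmodule
      (MvPolynomial.aeval
        ![(X 0 : MvPolynomial (Fin 2) k) ^ 2, X 0 * X 1 ^ 2, X 1 ^ 4] :
        MvPolynomial (Fin 3) k →ₐ[k] MvPolynomial (Fin 2) k).range = E22 k ∧
    RingHom.ker (MvPolynomial.aeval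
        ![(X 0 : MvPolynomial (Fin 2) k) ^ 2, X 0 * X 1 ^ 2, X 1 ^ 4] :
        MvPolynomial (Fin 3) k →ₐ[k] MvPolynomial (Fin 2) k).toRingHom
      = Ideal.span {(X 0 : MvPolynomial (Fin 3) k) * X 2 + X 1 ^ 2} := by
  set w := ![(1 : ℚ≥0) / 2, 3 / 4]
  have hx₀ := isWeightedHomogeneous_X k w 0
  have hx₁ := isWeightedHomogeneous_X k w 1
  refine ⟨?_, ?_, ?_, range_uvwMap k, ?_⟩
  · rw [(hx₀.pow 2).weightedTotalDegree_eq (pow_ne_zero _ (X_ne_zero _))]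
    norm_num [w]
  · rw [(hx₀.mul (hx₁.pow 2)).weightedTotalDegree_eq
      (mul_ne_zero (X_ne_zero _) (pow_ne_zero _ (X_ne_zero _)))]
    norm_num [w]
  · rw [(hx₁.pow 4).weightedTotalDegree_eq (pow_ne_zero _ (X_ne_zero _))]
    norm_num [w]
  · rw [← CharTwo.sub_eq_add]
    exact ker_uvwMap
end
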